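/- Suppose ξ admits the two decompositions ξ = Ũ_0 + Σ_{k=0}^{N−1} H^F_k·ΔM_k + Õ_N P-a.s. and ξ = U_0 + Σ_{k=0}^{N−1} H^H_k·ΔM_k + O_N P-a.s., where: Ũ_0 is square-integrable F_0-measurable, each H^F_k is F_k-measurable and square-integrable with H^F_k·ΔM_k square-integrable, and E[Õ_N·(V_0 + Σ_k φ_k·ΔM_k)] = 0 for every square-integrable F_0-measurable V_0 and every φ with φ_k F_k-measurable and φ_k·ΔM_k square-integrable; U_0 is square-integrable H_0-measurable, H^H is an admissible ℍ-predictable process with each H^H_k square-integrable, and E[O_N·η] = 0 for every η ∈ L^H. Then for every k < N, with w_k := E[(ΔM_k)² | F_k], one has H^H_k · E[w_k | H_k] = E[H^F_k·w_k | H_k] P-almost surely. -/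

import Mathlib

/-!
Test both decompositions of `ξ` against `1_s ΔM_k` with `s ∈ ℍ_k`. The residuals are orthogonal
to this test variable, and by the martingale property the initial values and the increments
`ΔM_j`, `j ≠ k`, integrate to zero against it; hence
`∫_s H^H_k (ΔM_k)² = E[ξ 1_s ΔM_k] = ∫_s H^F_k (ΔM_k)²`. So `H^H_k (ΔM_k)²` and `H^F_k (ΔM_k)²`
have the same `ℍ_k`-conditional expectation, and the tower property together with pulling out
the `ℍ_k`-measurable `H^H_k` turns this into the claim.
-/

open MeasureTheory

namespace MeasureTheory

variable {Ω : Type*} {mΩ : MeasurableSpace Ω} {P : Measure Ω}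

lemma Martingale.integral_mul_sub_eq_zero [IsFiniteMeasure P] {ι : Type*} [Preorder ι]
    {𝔽 : Filtration ι mΩ} {M : ι → Ω → ℝ} (hM : Martingale M 𝔽 P) {i j : ι} (hij : i ≤ j)
    {X : Ω → ℝ} (hX : StronglyMeasurable[𝔽 i] X)
    (hXM : Integrable (fun ω => X ω * (M j ω - M i ω)) P) :
    ∫ ω, X ω * (M j ω - M i ω) ∂P = 0 := by
  have hincrement : P[M j - M i | 𝔽 i] =ᵐ[P] 0 := by
    filter_upwards [condExp_sub (m := 𝔽 i) (hM.integrable j) (hM.integrable i),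
      hM.condExp_ae_eq hij] with ω hsub hj
    rw [hsub, Pi.sub_apply, hj, condExp_of_stronglyMeasurable (𝔽.le i) (hM.stronglyAdapted i)
      (hM.integrable i), Pi.zero_apply, sub_self]
  calc ∫ ω, X ω * (M j ω - M i ω) ∂P
      = ∫ ω, (P[X * (M j - M i) | 𝔽 i]) ω ∂P := (integral_condExp (𝔽.le i)).symm
    _ = ∫ ω, (X * P[M j - M i | 𝔽 i]) ω ∂P := integral_congr_ae <|
        condExp_mul_of_stronglyMeasurable_left hX hXM ((hM.integrable j).sub (hM.integrable i))
    _ = ∫ ω, (0 : Ω → ℝ) ω ∂P := integral_congr_ae (hincrement.mono fun ω h => by simp [h])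
    _ = 0 := by simp

lemma Martingale.integral_mul_increment_mul_increment_eq_zero [IsFiniteMeasure P]
    {𝔽 : Filtration ℕ mΩ} {M : ℕ → Ω → ℝ} (hM : Martingale M 𝔽 P) {j k : ℕ} (hjk : j < k)
    {A B : Ω → ℝ} (hA : StronglyMeasurable[𝔽 j] A) (hB : StronglyMeasurable[𝔽 k] B)
    (hAM : MemLp (fun ω => A ω * (M (j + 1) ω - M j ω)) 2 P)
    (hBM : MemLp (fun ω => B ω * (M (k + 1) ω - M k ω)) 2 P) :
    ∫ ω, A ω * (M (j + 1) ω - M j ω) * (B ω * (M (k + 1) ω - M k ω)) ∂P = 0 := by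
  have hAMB : StronglyMeasurable[𝔽 k] fun ω => A ω * (M (j + 1) ω - M j ω) * B ω :=
    ((hA.mono (𝔽.mono hjk.le)).mul (((hM.stronglyAdapted (j + 1)).mono (𝔽.mono hjk)).sub
      ((hM.stronglyAdapted j).mono (𝔽.mono hjk.le)))).mul hB
  have hint : Integrable
      (fun ω => A ω * (M (j + 1) ω - M j ω) * (B ω * (M (k + 1) ω - M k ω))) P :=
    hAM.integrable_mul hBM
  simp_rw [← mul_assoc] at hint ⊢
  exact hM.integral_mul_sub_eq_zero k.le_succ hAMB hint

lemma Martingale.integral_transform_mul_increment [IsFiniteMeasure P]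
    {𝔽 : Filtration ℕ mΩ} {M : ℕ → Ω → ℝ} (hM : Martingale M 𝔽 P) {N k : ℕ} (hk : k < N)
    {U ψ : Ω → ℝ} {H : ℕ → Ω → ℝ} (hU : StronglyMeasurable[𝔽 0] U) (hU2 : MemLp U 2 P)
    (hH : ∀ j, StronglyMeasurable[𝔽 j] (H j))
    (hHM : ∀ j, MemLp (fun ω => H j ω * (M (j + 1) ω - M j ω)) 2 P)
    (hψ : StronglyMeasurable[𝔽 k] ψ) (hψM : MemLp (fun ω => ψ ω * (M (k + 1) ω - M k ω)) 2 P) :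
    ∫ ω, (U ω + ∑ j ∈ Finset.range N, H j ω * (M (j + 1) ω - M j ω)) *
        (ψ ω * (M (k + 1) ω - M k ω)) ∂P
      = ∫ ω, H k ω * (M (k + 1) ω - M k ω) * (ψ ω * (M (k + 1) ω - M k ω)) ∂P := by
  have hterm : ∀ j, Integrable (fun ω => H j ω * (M (j + 1) ω - M j ω) *
      (ψ ω * (M (k + 1) ω - M k ω))) P := fun j => (hHM j).integrable_mul hψM
  have hUψM : Integrable (fun ω => U ω * (ψ ω * (M (k + 1) ω - M k ω))) P :=
    hU2.integrable_mul hψM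
  have hinitial : ∫ ω, U ω * (ψ ω * (M (k + 1) ω - M k ω)) ∂P = 0 := by
    simp_rw [← mul_assoc] at hUψM ⊢
    exact hM.integral_mul_sub_eq_zero k.le_succ ((hU.mono (𝔽.mono k.zero_le)).mul hψ) hUψM
  have hcross : ∀ j ≠ k, ∫ ω, H j ω * (M (j + 1) ω - M j ω) *
      (ψ ω * (M (k + 1) ω - M k ω)) ∂P = 0 := by
    intro j hjk
    rcases hjk.lt_or_gt with hjk | hkj
    · exact hM.integral_mul_increment_mul_increment_eq_zero hjk (hH j) hψ (hHM j) hψM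
    · simp_rw [mul_comm (H j _ * _)]
      exact hM.integral_mul_increment_mul_increment_eq_zero hkj hψ (hH j) hψM (hHM j)
  simp_rw [add_mul, Finset.sum_mul]
  rw [integral_add hUψM (integrable_finsetSum _ fun j _ => hterm j),
    integral_finsetSum _ fun j _ => hterm j, hinitial, zero_add,
    Finset.sum_eq_single_of_mem k (Finset.mem_range.mpr hk) fun j _ => hcross j]

lemma integrable_mul_condExp {m : MeasurableSpace Ω} {G Y : Ω → ℝ} (hG : StronglyMeasurable[m] G)
    (hGY : Integrable (G * Y) P) (hY : Integrable Y P) : Integrable (G * P[Y | m]) P :=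
  integrable_condExp.congr (condExp_mul_of_stronglyMeasurable_left hG hGY hY)

lemma condExp_mul_condExp_of_le {m₁ m₂ : MeasurableSpace Ω} (hm₁₂ : m₁ ≤ m₂) (hm₂ : m₂ ≤ mΩ)
    [SigmaFinite (P.trim hm₂)] {G Y : Ω → ℝ} (hG : StronglyMeasurable[m₂] G)
    (hGY : Integrable (G * Y) P) (hY : Integrable Y P) :
    P[G * P[Y | m₂] | m₁] =ᵐ[P] P[G * Y | m₁] :=
  (condExp_congr_ae (condExp_mul_of_stronglyMeasurable_left hG hGY hY).symm).trans
    (condExp_condExp_of_le hm₁₂ hm₂)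

lemma condExp_ae_eq_condExp_of_forall_setIntegral_eq {m : MeasurableSpace Ω} (hm : m ≤ mΩ)
    [SigmaFinite (P.trim hm)] {f g : Ω → ℝ} (hf : Integrable f P) (hg : Integrable g P)
    (hfg : ∀ s, MeasurableSet[m] s → ∫ ω in s, f ω ∂P = ∫ ω in s, g ω ∂P) :
    P[f | m] =ᵐ[P] P[g | m] :=
  ae_eq_condExp_of_forall_setIntegral_eq hm hg (fun _ _ _ => integrable_condExp.integrableOn)
    (fun s hs _ => by rw [setIntegral_condExp hm hf hs, hfg s hs])
    stronglyMeasurable_condExp.aestronglyMeasurable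

lemma integrable_mul_sq {f g : Ω → ℝ} (hfg : MemLp (fun ω => f ω * g ω) 2 P) (hg : MemLp g 2 P) :
    Integrable (f * fun ω => g ω ^ 2) P := by
  have h : Integrable (fun ω => f ω * g ω * g ω) P := hfg.integrable_mul hg
  simp only [mul_assoc, ← sq] at h
  exact h

/-- A Galtchouk–Kunita–Watanabe decomposition of `ξ` with respect to the information flow `𝔾`. -/
structure IsGKWDecomposition (P : Measure Ω) (𝔾 : Filtration ℕ mΩ) (M : ℕ → Ω → ℝ) (N : ℕ)
    (ξ U : Ω → ℝ) (H : ℕ → Ω → ℝ) (O : Ω → ℝ) : Prop where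
  stronglyMeasurable_initial : StronglyMeasurable[𝔾 0] U
  memLp_initial : MemLp U 2 P
  stronglyMeasurable_integrand : ∀ k, StronglyMeasurable[𝔾 k] (H k)
  memLp_integrand_mul_increment : ∀ k, MemLp (fun ω => H k ω * (M (k + 1) ω - M k ω)) 2 P
  orthogonal : ∀ (V₀ : Ω → ℝ) (φ : ℕ → Ω → ℝ), MemLp V₀ 2 P → StronglyMeasurable[𝔾 0] V₀ →
    (∀ k, StronglyMeasurable[𝔾 k] (φ k)) →
    (∀ k, MemLp (fun ω => φ k ω * (M (k + 1) ω - M k ω)) 2 P) →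
    ∫ ω, O ω * (V₀ ω + ∑ k ∈ Finset.range N, φ k ω * (M (k + 1) ω - M k ω)) ∂P = 0
  ae_eq : ξ =ᵐ[P] fun ω => U ω + (∑ k ∈ Finset.range N, H k ω * (M (k + 1) ω - M k ω)) + O ω

namespace IsGKWDecomposition

variable {𝔾 : Filtration ℕ mΩ} {M : ℕ → Ω → ℝ} {N : ℕ} {ξ U O : Ω → ℝ} {H : ℕ → Ω → ℝ}

lemma memLp_initial_add_transform (h : IsGKWDecomposition P 𝔾 M N ξ U H O) :
    MemLp (fun ω => U ω + ∑ k ∈ Finset.range N, H k ω * (M (k + 1) ω - M k ω)) 2 P :=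
  h.memLp_initial.add (memLp_finsetSum _ fun k _ => h.memLp_integrand_mul_increment k)

lemma memLp_residual (h : IsGKWDecomposition P 𝔾 M N ξ U H O) (hξ : MemLp ξ 2 P) :
    MemLp O 2 P :=
  (hξ.sub h.memLp_initial_add_transform).ae_eq <| h.ae_eq.mono fun ω hω => by
    simp only [Pi.sub_apply, hω]
    ring

lemma integral_residual_mul_increment_eq_zero (h : IsGKWDecomposition P 𝔾 M N ξ U H O)
    {k : ℕ} (hk : k < N) {ψ : Ω → ℝ} (hψ : StronglyMeasurable[𝔾 k] ψ)
    (hψM : MemLp (fun ω => ψ ω * (M (k + 1) ω - M k ω)) 2 P) :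
    ∫ ω, O ω * (ψ ω * (M (k + 1) ω - M k ω)) ∂P = 0 := by
  classical
  set φ : ℕ → Ω → ℝ := Pi.single k ψ
  have hφ : ∀ j, StronglyMeasurable[𝔾 j] (φ j) := by
    intro j
    rcases eq_or_ne j k with rfl | hjk
    · simpa [φ] using hψ
    · simpa [φ, hjk] using stronglyMeasurable_zero
  have hφM : ∀ j, MemLp (fun ω => φ j ω * (M (j + 1) ω - M j ω)) 2 P := by
    intro j
    rcases eq_or_ne j k with rfl | hjk
    · simpa [φ] using hψM
    · simp [φ, hjk]
  simpa [φ, Pi.single_apply, ite_apply, ite_mul, Finset.sum_ite_eq', hk] using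
    h.orthogonal 0 φ MemLp.zero stronglyMeasurable_zero hφ hφM

lemma integral_mul_increment [IsFiniteMeasure P] (h : IsGKWDecomposition P 𝔾 M N ξ U H O)
    {𝔽 : Filtration ℕ mΩ} (hle : ∀ k, 𝔾 k ≤ 𝔽 k) (hM : Martingale M 𝔽 P) (hξ : MemLp ξ 2 P)
    {k : ℕ} (hk : k < N) {ψ : Ω → ℝ} (hψ : StronglyMeasurable[𝔾 k] ψ)
    (hψM : MemLp (fun ω => ψ ω * (M (k + 1) ω - M k ω)) 2 P) :
    ∫ ω, ξ ω * (ψ ω * (M (k + 1) ω - M k ω)) ∂P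
      = ∫ ω, H k ω * (M (k + 1) ω - M k ω) * (ψ ω * (M (k + 1) ω - M k ω)) ∂P := by
  calc ∫ ω, ξ ω * (ψ ω * (M (k + 1) ω - M k ω)) ∂P
      = ∫ ω, (U ω + ∑ j ∈ Finset.range N, H j ω * (M (j + 1) ω - M j ω)) *
            (ψ ω * (M (k + 1) ω - M k ω)) + O ω * (ψ ω * (M (k + 1) ω - M k ω)) ∂P :=
        integral_congr_ae <| h.ae_eq.mono fun ω hω => by simp only [hω]; ring
    _ = ∫ ω, (U ω + ∑ j ∈ Finset.range N, H j ω * (M (j + 1) ω - M j ω)) *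
            (ψ ω * (M (k + 1) ω - M k ω)) ∂P +
          ∫ ω, O ω * (ψ ω * (M (k + 1) ω - M k ω)) ∂P :=
        integral_add (h.memLp_initial_add_transform.integrable_mul hψM)
          ((h.memLp_residual hξ).integrable_mul hψM)
    _ = ∫ ω, H k ω * (M (k + 1) ω - M k ω) * (ψ ω * (M (k + 1) ω - M k ω)) ∂P := by
        rw [h.integral_residual_mul_increment_eq_zero hk hψ hψM, add_zero,
          hM.integral_transform_mul_increment hk (h.stronglyMeasurable_initial.mono (hle 0))
            h.memLp_initial (fun j => (h.stronglyMeasurable_integrand j).mono (hle j))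
            h.memLp_integrand_mul_increment (hψ.mono (hle k)) hψM]

lemma setIntegral_mul_sq_increment [IsFiniteMeasure P] (h : IsGKWDecomposition P 𝔾 M N ξ U H O)
    {𝔽 : Filtration ℕ mΩ} (hle : ∀ k, 𝔾 k ≤ 𝔽 k) (hM : Martingale M 𝔽 P)
    (hM2 : ∀ k, MemLp (M k) 2 P) (hξ : MemLp ξ 2 P) {k : ℕ} (hk : k < N) {s : Set Ω}
    (hs : MeasurableSet[𝔾 k] s) :
    ∫ ω in s, H k ω * (M (k + 1) ω - M k ω) ^ 2 ∂P
      = ∫ ω, ξ ω * (s.indicator 1 ω * (M (k + 1) ω - M k ω)) ∂P := by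
  have hsΩ : MeasurableSet s := 𝔽.le k s (hle k s hs)
  have hψM : MemLp (fun ω => s.indicator 1 ω * (M (k + 1) ω - M k ω)) 2 P := by
    refine (((hM2 (k + 1)).sub (hM2 k)).indicator hsΩ).ae_eq (ae_of_all _ fun ω => ?_)
    by_cases hω : ω ∈ s <;> simp [hω]
  rw [h.integral_mul_increment hle hM hξ hk (stronglyMeasurable_one.indicator hs) hψM,
    ← integral_indicator hsΩ]
  refine integral_congr_ae (ae_of_all _ fun ω => ?_)
  by_cases hω : ω ∈ s <;> simp [hω]
  ring

end IsGKWDecomposition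

end MeasureTheory

theorem stmt_12 {Ω : Type*} {mΩ : MeasurableSpace Ω} {P : Measure Ω} [IsProbabilityMeasure P]
    (N : ℕ) (𝔽 ℍ : Filtration ℕ mΩ) (hle : ∀ k, ℍ k ≤ 𝔽 k)
    (M : ℕ → Ω → ℝ) (hM : Martingale M 𝔽 P) (hM2 : ∀ k, MemLp (M k) 2 P)
    (ξ : Ω → ℝ) (hξ : MemLp ξ 2 P)
    -- the full-information decomposition
    (Utilde : Ω → ℝ) (HF : ℕ → Ω → ℝ) (OtildeN : Ω → ℝ)
    (hUtmeas : StronglyMeasurable[𝔽 0] Utilde) (hUt2 : MemLp Utilde 2 P)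
    (hHFmeas : ∀ k, StronglyMeasurable[𝔽 k] (HF k))
    (hHFM2 : ∀ k, MemLp (fun ω => HF k ω * (M (k + 1) ω - M k ω)) 2 P)
    (hOtorth : ∀ (V₀ : Ω → ℝ) (φ : ℕ → Ω → ℝ), MemLp V₀ 2 P →
      StronglyMeasurable[𝔽 0] V₀ →
      (∀ k, StronglyMeasurable[𝔽 k] (φ k)) →
      (∀ k, MemLp (fun ω => φ k ω * (M (k + 1) ω - M k ω)) 2 P) →
      ∫ ω, OtildeN ω * (V₀ ω + ∑ k ∈ Finset.range N, φ k ω * (M (k + 1) ω - M k ω)) ∂P = 0)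
    (hdecF : ξ =ᵐ[P] fun ω =>
      Utilde ω + (∑ k ∈ Finset.range N, HF k ω * (M (k + 1) ω - M k ω)) + OtildeN ω)
    -- the partial-information decomposition
    (U₀ : Ω → ℝ) (HH : ℕ → Ω → ℝ) (ON : Ω → ℝ)
    (hU₀meas : StronglyMeasurable[ℍ 0] U₀) (hU₀2 : MemLp U₀ 2 P)
    (hHHmeas : ∀ k, StronglyMeasurable[ℍ k] (HH k))
    (hHHM2 : ∀ k, MemLp (fun ω => HH k ω * (M (k + 1) ω - M k ω)) 2 P)
    (hOorth : ∀ (V₀ : Ω → ℝ) (φ : ℕ → Ω → ℝ), MemLp V₀ 2 P →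
      StronglyMeasurable[ℍ 0] V₀ →
      (∀ k, StronglyMeasurable[ℍ k] (φ k)) →
      (∀ k, MemLp (fun ω => φ k ω * (M (k + 1) ω - M k ω)) 2 P) →
      ∫ ω, ON ω * (V₀ ω + ∑ k ∈ Finset.range N, φ k ω * (M (k + 1) ω - M k ω)) ∂P = 0)
    (hdecH : ξ =ᵐ[P] fun ω =>
      U₀ ω + (∑ k ∈ Finset.range N, HH k ω * (M (k + 1) ω - M k ω)) + ON ω) :
    ∀ k < N,
      (fun ω => HH k ω *
          (P[P[fun ω' => (M (k + 1) ω' - M k ω') ^ 2 | 𝔽 k] | ℍ k]) ω)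
        =ᵐ[P]
      P[fun ω => HF k ω *
          (P[fun ω' => (M (k + 1) ω' - M k ω') ^ 2 | 𝔽 k]) ω | ℍ k] := by
  intro k hk
  have hF : IsGKWDecomposition P 𝔽 M N ξ Utilde HF OtildeN :=
    ⟨hUtmeas, hUt2, hHFmeas, hHFM2, hOtorth, hdecF⟩
  have hH : IsGKWDecomposition P ℍ M N ξ U₀ HH ON :=
    ⟨hU₀meas, hU₀2, hHHmeas, hHHM2, hOorth, hdecH⟩
  set Y : Ω → ℝ := fun ω => (M (k + 1) ω - M k ω) ^ 2
  have hΔM : MemLp (fun ω => M (k + 1) ω - M k ω) 2 P := (hM2 (k + 1)).sub (hM2 k)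
  have hY : Integrable Y P := hΔM.integrable_sq
  have hHHY : Integrable (HH k * Y) P := integrable_mul_sq (hHHM2 k) hΔM
  have hHFY : Integrable (HF k * Y) P := integrable_mul_sq (hHFM2 k) hΔM
  have hsame : P[HH k * Y | ℍ k] =ᵐ[P] P[HF k * Y | ℍ k] :=
    condExp_ae_eq_condExp_of_forall_setIntegral_eq (ℍ.le k) hHHY hHFY fun s hs =>
      (hH.setIntegral_mul_sq_increment hle hM hM2 hξ hk hs).trans
        (hF.setIntegral_mul_sq_increment (fun _ => le_rfl) hM hM2 hξ hk (hle k s hs)).symm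
  calc HH k * P[P[Y | 𝔽 k] | ℍ k]
      =ᵐ[P] P[HH k * P[Y | 𝔽 k] | ℍ k] :=
        (condExp_mul_of_stronglyMeasurable_left (hHHmeas k)
          (integrable_mul_condExp ((hHHmeas k).mono (hle k)) hHHY hY) integrable_condExp).symm
    _ =ᵐ[P] P[HH k * Y | ℍ k] := condExp_mul_condExp_of_le (hle k) (𝔽.le k)
        ((hHHmeas k).mono (hle k)) hHHY hY
    _ =ᵐ[P] P[HF k * Y | ℍ k] := hsame
    _ =ᵐ[P] P[HF k * P[Y | 𝔽 k] | ℍ k] :=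
        (condExp_mul_condExp_of_le (hle k) (𝔽.le k) (hHFmeas k) hHFY hY).symm
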